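/- Let u : ℝ^{1+n} → ℂ be a C² map satisfying □₂u = 0 and ∂^μu ∂_μu = 0. For every C² function f : ℂ → ℂ (viewed as a function of u and ū), the current J_μ = (∂f/∂u) ∂_μu − (∂f/∂ū) ∂_μū is conserved: ∂^μ J_μ = 0. -/

import Mathlib

/-- Partial derivative in the μ-th coordinate direction. -/
noncomputable def pd {n : ℕ} (μ : Fin (n+1)) (u : (Fin (n+1) → ℝ) → ℂ) :
    (Fin (n+1) → ℝ) → ℂ :=
  fun x => fderiv ℝ u x (Pi.single μ 1)

/-- The d'Alembertian □₂ = ∂₀² − Σⱼ ∂ⱼ² on ℝ^{1+n}. -/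
noncomputable def box2 {n : ℕ} (u : (Fin (n+1) → ℝ) → ℂ) :
    (Fin (n+1) → ℝ) → ℂ :=
  fun x => pd 0 (pd 0 u) x - ∑ j : Fin n, pd j.succ (pd j.succ u) x

/-- Wirtinger derivative ∂F/∂z of F : ℂ → ℂ viewed as a real-differentiable map. -/
noncomputable def w1 (F : ℂ → ℂ) : ℂ → ℂ :=
  fun z => (fderiv ℝ F z 1 - Complex.I * fderiv ℝ F z Complex.I) / 2

/-- Wirtinger derivative ∂F/∂z̄ of F : ℂ → ℂ. -/
noncomputable def w1bar (F : ℂ → ℂ) : ℂ → ℂ :=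
  fun z => (fderiv ℝ F z 1 + Complex.I * fderiv ℝ F z Complex.I) / 2


/-!
By the Wirtinger chain rule, `∂_μ (g ∘ u) = (∂g/∂u) ∂_μ u + (∂g/∂ū) ∂_μ ū`. Applied to
`g = ∂f/∂u` and `g = ∂f/∂ū` it turns the divergence of `J` into
`f_uu ∂^μu ∂_μu - f_ūū ∂^μū ∂_μū + f_u □u - f_ū □ū`: the mixed terms `f_ūu ∂^μu ∂_μū` and
`f_uū ∂^μū ∂_μu` cancel because second derivatives of a `C²` function are symmetric. The null
condition, the wave equation and their complex conjugates kill the four remaining terms.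
-/

open Complex ComplexConjugate

noncomputable def wirtinger (c : ℂ) : (ℂ →L[ℝ] ℂ) →L[ℝ] ℂ :=
  (2⁻¹ : ℂ) • (ContinuousLinearMap.apply ℝ ℂ (1 : ℂ) + c • ContinuousLinearMap.apply ℝ ℂ I)

lemma wirtinger_apply (c : ℂ) (L : ℂ →L[ℝ] ℂ) : wirtinger c L = (L 1 + c * L I) / 2 := by
  simp [wirtinger]; ring

lemma w1_eq_wirtinger (F : ℂ → ℂ) (z : ℂ) : w1 F z = wirtinger (-I) (fderiv ℝ F z) := by
  rw [wirtinger_apply, w1]; ring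

lemma w1bar_eq_wirtinger (F : ℂ → ℂ) (z : ℂ) : w1bar F z = wirtinger I (fderiv ℝ F z) := by
  rw [wirtinger_apply, w1bar]

lemma ContinuousLinearMap.apply_eq_wirtinger (L : ℂ →L[ℝ] ℂ) (w : ℂ) :
    L w = wirtinger (-I) L * w + wirtinger I L * conj w := by
  have hL : L w = w.re * L 1 + w.im * L I := by
    calc L w = L (w.re • 1 + w.im • I) := by simp [real_smul]
      _ = _ := by rw [map_add, map_smul, map_smul, real_smul, real_smul]
  rw [hL, wirtinger_apply, wirtinger_apply]
  conv_rhs => rw [← re_add_im w, map_add, map_mul, conj_ofReal, conj_ofReal, conj_I]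
  linear_combination ((w.im : ℂ) * L I) * I_mul_I

lemma ContDiff.differentiable_fderiv {𝕜 E F : Type*} [NontriviallyNormedField 𝕜]
    [NormedAddCommGroup E] [NormedSpace 𝕜 E] [NormedAddCommGroup F] [NormedSpace 𝕜 F]
    {u : E → F} (hu : ContDiff 𝕜 2 u) : Differentiable 𝕜 (fderiv 𝕜 u) :=
  (hu.fderiv_right (m := 1) (by norm_num)).differentiable one_ne_zero

section

variable {E : Type*} [NormedAddCommGroup E] [NormedSpace ℝ E]

lemma fderiv_comp_apply_eq_wirtinger {f : ℂ → ℂ} {u : E → ℂ} {x : E}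
    (hf : DifferentiableAt ℝ f (u x)) (hu : DifferentiableAt ℝ u x) (v : E) :
    fderiv ℝ (fun y => f (u y)) x v
      = w1 f (u x) * fderiv ℝ u x v + w1bar f (u x) * conj (fderiv ℝ u x v) := by
  rw [fderiv_fun_comp x hf hu, ContinuousLinearMap.comp_apply,
    ContinuousLinearMap.apply_eq_wirtinger, w1_eq_wirtinger, w1bar_eq_wirtinger]

lemma fderiv_conj_apply (u : E → ℂ) (x v : E) :
    fderiv ℝ (fun y => conj (u y)) x v = conj (fderiv ℝ u x v) := by
  change fderiv ℝ (fun y => star (u y)) x v = star (fderiv ℝ u x v)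
  rw [fderiv_star]
  rfl

lemma ContDiff.hasFDerivAt_wirtinger_fderiv {f : ℂ → ℂ} (hf : ContDiff ℝ 2 f) (c z : ℂ) :
    HasFDerivAt (fun z => wirtinger c (fderiv ℝ f z))
      ((wirtinger c).comp (fderiv ℝ (fderiv ℝ f) z)) z :=
  (wirtinger c).hasFDerivAt.comp z (hf.differentiable_fderiv z).hasFDerivAt

lemma ContDiff.differentiable_w1 {f : ℂ → ℂ} (hf : ContDiff ℝ 2 f) : Differentiable ℝ (w1 f) :=
  fun z => by
    simpa only [← w1_eq_wirtinger] using (hf.hasFDerivAt_wirtinger_fderiv (-I) z).differentiableAt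

lemma ContDiff.differentiable_w1bar {f : ℂ → ℂ} (hf : ContDiff ℝ 2 f) :
    Differentiable ℝ (w1bar f) :=
  fun z => by
    simpa only [← w1bar_eq_wirtinger] using (hf.hasFDerivAt_wirtinger_fderiv I z).differentiableAt

lemma ContDiff.w1bar_w1 {f : ℂ → ℂ} (hf : ContDiff ℝ 2 f) (z : ℂ) :
    w1bar (w1 f) z = w1 (w1bar f) z := by
  have hsymm : fderiv ℝ (fderiv ℝ f) z 1 I = fderiv ℝ (fderiv ℝ f) z I 1 :=
    hf.contDiffAt.isSymmSndFDerivAt (by simp) 1 I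
  have hw1 : w1 f = fun z => wirtinger (-I) (fderiv ℝ f z) := funext (w1_eq_wirtinger f)
  have hw1bar : w1bar f = fun z => wirtinger I (fderiv ℝ f z) := funext (w1bar_eq_wirtinger f)
  rw [w1bar_eq_wirtinger, w1_eq_wirtinger, hw1, hw1bar,
    (hf.hasFDerivAt_wirtinger_fderiv (-I) z).fderiv, (hf.hasFDerivAt_wirtinger_fderiv I z).fderiv]
  simp only [wirtinger_apply, ContinuousLinearMap.comp_apply]
  linear_combination (-I / 2) * hsymm

lemma fderiv_wirtinger_current_apply {u : E → ℂ} {f : ℂ → ℂ} (hu : ContDiff ℝ 2 u)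
    (hf : ContDiff ℝ 2 f) (x v : E) :
    fderiv ℝ (fun y => w1 f (u y) * fderiv ℝ u y v - w1bar f (u y) * conj (fderiv ℝ u y v)) x v
      = w1 (w1 f) (u x) * fderiv ℝ u x v ^ 2 - w1bar (w1bar f) (u x) * conj (fderiv ℝ u x v) ^ 2
        + w1 f (u x) * fderiv ℝ (fun y => fderiv ℝ u y v) x v
        - w1bar f (u x) * conj (fderiv ℝ (fun y => fderiv ℝ u y v) x v) := by
  have hux : DifferentiableAt ℝ u x := hu.differentiable (by norm_num) x
  have hw1 : DifferentiableAt ℝ (fun y => w1 f (u y)) x := (hf.differentiable_w1 _).comp x hux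
  have hw1bar : DifferentiableAt ℝ (fun y => w1bar f (u y)) x :=
    (hf.differentiable_w1bar _).comp x hux
  have hdu : DifferentiableAt ℝ (fun y => fderiv ℝ u y v) x :=
    (hu.differentiable_fderiv x).clm_apply (differentiableAt_const v)
  have hdu' : DifferentiableAt ℝ (fun y => conj (fderiv ℝ u y v)) x := hdu.star
  rw [fderiv_fun_sub (hw1.fun_mul hdu) (hw1bar.fun_mul hdu'), fderiv_fun_mul hw1 hdu,
    fderiv_fun_mul hw1bar hdu']
  simp only [sub_apply, add_apply, smul_apply, smul_eq_mul, fderiv_conj_apply,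
    fderiv_comp_apply_eq_wirtinger (hf.differentiable_w1 _) hux,
    fderiv_comp_apply_eq_wirtinger (hf.differentiable_w1bar _) hux]
  linear_combination (fderiv ℝ u x v * conj (fderiv ℝ u x v)) * hf.w1bar_w1 (u x)

end

theorem stmt4 {n : ℕ} (u : (Fin (n+1) → ℝ) → ℂ)
    (hu : ContDiff ℝ 2 u)
    (hwave : ∀ x, box2 u x = 0)
    (hnull : ∀ x, (pd 0 u x)^2 - ∑ j : Fin n, (pd j.succ u x)^2 = 0)
    (f : ℂ → ℂ) (hf : ContDiff ℝ 2 f)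
    (J : Fin (n+1) → (Fin (n+1) → ℝ) → ℂ)
    (hJ : J = fun μ x =>
      w1 f (u x) * pd μ u x - w1bar f (u x) * pd μ (fun y => starRingEnd ℂ (u y)) x) :
    ∀ x, pd 0 (J 0) x - ∑ l : Fin n, pd l.succ (J l.succ) x = 0 := by
  intro x
  have hdiv : ∀ μ, pd μ (J μ) x
      = w1 (w1 f) (u x) * pd μ u x ^ 2 - w1bar (w1bar f) (u x) * conj (pd μ u x) ^ 2
        + w1 f (u x) * pd μ (pd μ u) x - w1bar f (u x) * conj (pd μ (pd μ u) x) := by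
    intro μ
    simp only [hJ, pd, fderiv_conj_apply]
    exact fderiv_wirtinger_current_apply hu hf x _
  have hwave_x := hwave x
  have hwave' := congrArg conj hwave_x
  have hnull' := congrArg conj (hnull x)
  simp only [box2, map_sub, map_sum, map_pow, map_zero] at hwave_x hwave' hnull'
  simp only [hdiv, Finset.sum_sub_distrib, Finset.sum_add_distrib, ← Finset.mul_sum]
  linear_combination w1 (w1 f) (u x) * hnull x - w1bar (w1bar f) (u x) * hnull'
    + w1 f (u x) * hwave_x - w1bar f (u x) * hwave'
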